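/- arXiv:2104.14803 — 2 statements merged into one kernel-verified Lean document; each statement's English description precedes it below -/
import Mathlib

section
/- Let d ≥ 1 and T > 0. Let θˢ : ℝ × ℝ^d → ℝ be C² and ψˢ : ℝ × ℝ^d → ℝ be C¹, set vˢ = ∇ₓθˢ, and assume the Hamilton–Jacobi equation ∂ₜθˢ + |∇ₓθˢ|²/2 + ψˢ = 0 holds everywhere. Define A(t,x) = (t − T)·vˢ(t,x) and θ(t,x) = (t − T)·(ψˢ(t,x) − |vˢ(t,x)|²/2). Then for every (t,x): (I − ∇ₓA − (∇ₓA)ᵀ)(t,x) · vˢ(t,x) = ∂ₜA(t,x) + ∇ₓθ(t,x). -/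
/-!
Differentiating the Hamilton–Jacobi equation in `xᵢ` gives
`∂ₜvᵢ + ∑ⱼ vⱼ ∂ᵢvⱼ + ∂ᵢψˢ = 0`, where `∂ₜvᵢ = ∂ᵢ∂ₜθˢ` and `∂ᵢvⱼ = ∂ⱼvᵢ` by symmetry of the second
derivative of `θˢ`. Since `∇ₓA = (t - T) ∇ₓvˢ` is symmetric, the left-hand side is
`vᵢ - 2 (t - T) ∑ⱼ vⱼ ∂ᵢvⱼ`, while `∂ₜAᵢ + ∂ᵢθ = vᵢ + (t - T) (∂ₜvᵢ + ∂ᵢψˢ - ∑ⱼ vⱼ ∂ᵢvⱼ)`;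
the differentiated equation identifies the two.
-/

/-- Spatial partial derivative `∂f/∂xᵢ` of a function `f : ℝ^d → ℝ`. -/
noncomputable def pdx (d : ℕ) (f : (Fin d → ℝ) → ℝ) (x : Fin d → ℝ) (i : Fin d) : ℝ :=
  fderiv ℝ f x (Pi.single i 1)

section Calculus

variable {E F G : Type*} [NormedAddCommGroup E] [NormedSpace ℝ E]
  [NormedAddCommGroup F] [NormedSpace ℝ F] [NormedAddCommGroup G] [NormedSpace ℝ G]

theorem fderiv_comp_prodMk_right_apply {f : G × E → F} {t : G} {x : E}
    (hf : DifferentiableAt ℝ f (t, x)) (v : E) :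
    fderiv ℝ (fun y => f (t, y)) x v = fderiv ℝ f (t, x) (0, v) := by
  have h : HasFDerivAt (fun y => f (t, y)) _ x :=
    hf.hasFDerivAt.comp x (hasFDerivAt_prodMk_right t x)
  simp [h.fderiv]

theorem hasDerivAt_comp_prodMk_left {f : ℝ × E → F} {t : ℝ} {x : E}
    (hf : DifferentiableAt ℝ f (t, x)) :
    HasDerivAt (fun s => f (s, x)) (fderiv ℝ f (t, x) (1, 0)) t := by
  simpa [Function.comp_def] using
    hf.hasFDerivAt.comp_hasDerivAt t ((hasDerivAt_id t).prodMk (hasDerivAt_const t x))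

theorem fderiv_fderiv_apply_comm {f : E → F} {x : E} (hf : ContDiffAt ℝ 2 f x) (u w : E) :
    fderiv ℝ (fun y => fderiv ℝ f y w) x u = fderiv ℝ (fun y => fderiv ℝ f y u) x w := by
  have hf' : DifferentiableAt ℝ (fderiv ℝ f) x :=
    (hf.fderiv_right (m := 1) (by norm_num)).differentiableAt (by norm_num)
  simpa [fderiv_clm_apply hf' (differentiableAt_const _)] using hf.isSymmSndFDerivAt (by simp) u w

theorem hasFDerivAt_half_sum_sq {ι : Type*} [Fintype ι] {g : ι → E → ℝ} {x : E}
    (hg : ∀ j, DifferentiableAt ℝ (g j) x) :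
    HasFDerivAt (fun y => (∑ j, g j y ^ 2) / 2) (∑ j, g j x • fderiv ℝ (g j) x) x := by
  have hsum := HasFDerivAt.fun_sum (u := Finset.univ) fun j _ => (hg j).hasFDerivAt.pow 2
  simp only [div_eq_mul_inv]
  refine (hsum.mul_const (2⁻¹ : ℝ)).congr_fderiv ?_
  ext v
  simp [Finset.mul_sum]
  ring_nf

theorem fderiv_add_half_sum_sq_add_apply_eq_zero {ι : Type*} [Fintype ι] {a ψ : E → ℝ}
    {g : ι → E → ℝ} (hzero : ∀ y, a y + (∑ j, g j y ^ 2) / 2 + ψ y = 0) {x : E}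
    (ha : DifferentiableAt ℝ a x) (hg : ∀ j, DifferentiableAt ℝ (g j) x)
    (hψ : DifferentiableAt ℝ ψ x) (u : E) :
    fderiv ℝ a x u + ∑ j, g j x * fderiv ℝ (g j) x u + fderiv ℝ ψ x u = 0 := by
  have h := (ha.hasFDerivAt.fun_add (hasFDerivAt_half_sum_sq hg)).fun_add hψ.hasFDerivAt
  rw [show (fun y => a y + (∑ j, g j y ^ 2) / 2 + ψ y) = fun _ => 0 from funext hzero] at h
  simpa using congrArg (· u) (h.unique (hasFDerivAt_const 0 x))

theorem fderiv_hamiltonJacobi_apply_eq_zero {ι : Type*} [Fintype ι] {θ ψ : ℝ × E → ℝ}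
    {e : ι → E} (hHJ : ∀ q, fderiv ℝ θ q (1, 0) + (∑ j, fderiv ℝ θ q (0, e j) ^ 2) / 2 + ψ q = 0)
    {q : ℝ × E} (hθ : ContDiffAt ℝ 2 θ q) (hψ : DifferentiableAt ℝ ψ q) (u : ℝ × E) :
    fderiv ℝ (fun p => fderiv ℝ θ p u) q (1, 0)
      + ∑ j, fderiv ℝ θ q (0, e j) * fderiv ℝ (fun p => fderiv ℝ θ p (0, e j)) q u
      + fderiv ℝ ψ q u = 0 := by
  have hDθ : DifferentiableAt ℝ (fderiv ℝ θ) q :=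
    (hθ.fderiv_right (m := 1) (by norm_num)).differentiableAt (by norm_num)
  rw [fderiv_fderiv_apply_comm hθ]
  exact fderiv_add_half_sum_sq_add_apply_eq_zero hHJ (hDθ.clm_apply (differentiableAt_const _))
    (fun j => hDθ.clm_apply (differentiableAt_const _)) hψ u

theorem deriv_sub_mul_comp_prodMk_left {g : ℝ × E → ℝ} {t : ℝ} {x : E}
    (hg : DifferentiableAt ℝ g (t, x)) (T : ℝ) :
    deriv (fun s => (s - T) * g (s, x)) t = g (t, x) + (t - T) * fderiv ℝ g (t, x) (1, 0) := by
  rw [(((hasDerivAt_id' t).sub_const T).fun_mul (hasDerivAt_comp_prodMk_left hg)).deriv]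
  ring

end Calculus

theorem pdx_const_mul {d : ℕ} (c : ℝ) (f : (Fin d → ℝ) → ℝ) (x : Fin d → ℝ) (i : Fin d) :
    pdx d (fun y => c * f y) x i = c * pdx d f x i := by
  simp only [pdx, ← smul_eq_mul, ← Pi.smul_def, fderiv_const_smul_field,
    smul_apply, Pi.smul_apply]

theorem pdx_comp_prodMk_right {d : ℕ} {f : ℝ × (Fin d → ℝ) → ℝ} {t : ℝ} {x : Fin d → ℝ}
    (hf : DifferentiableAt ℝ f (t, x)) (i : Fin d) :
    pdx d (fun y => f (t, y)) x i = fderiv ℝ f (t, x) (0, Pi.single i 1) :=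
  fderiv_comp_prodMk_right_apply hf _

theorem pdx_sub_half_sum_sq_comp_prodMk_right {d : ℕ} {ι : Type*} [Fintype ι]
    {ψ : ℝ × (Fin d → ℝ) → ℝ} {g : ι → ℝ × (Fin d → ℝ) → ℝ} {t : ℝ} {x : Fin d → ℝ}
    (hψ : DifferentiableAt ℝ ψ (t, x)) (hg : ∀ j, DifferentiableAt ℝ (g j) (t, x)) (i : Fin d) :
    pdx d (fun y => ψ (t, y) - (∑ j, g j (t, y) ^ 2) / 2) x i
      = fderiv ℝ ψ (t, x) (0, Pi.single i 1)
        - ∑ j, g j (t, x) * fderiv ℝ (g j) (t, x) (0, Pi.single i 1) := by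
  have h := hψ.hasFDerivAt.fun_sub (hasFDerivAt_half_sum_sq hg)
  rw [pdx_comp_prodMk_right h.differentiableAt, h.fderiv]
  simp

theorem stmt6_general (d : ℕ) (T : ℝ)
    (θs : ℝ × (Fin d → ℝ) → ℝ) (ψs : ℝ × (Fin d → ℝ) → ℝ)
    (hθs : ContDiff ℝ 2 θs) (hψs : ContDiff ℝ 1 ψs)
    (vs : ℝ → (Fin d → ℝ) → Fin d → ℝ)
    (hvs : ∀ t x i, vs t x i = pdx d (fun y => θs (t, y)) x i)
    (hHJ : ∀ t x, deriv (fun s => θs (s, x)) t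
        + (∑ j, (vs t x j) ^ 2) / 2 + ψs (t, x) = 0)
    (A : ℝ → (Fin d → ℝ) → Fin d → ℝ)
    (hA : ∀ t x i, A t x i = (t - T) * vs t x i)
    (θ : ℝ → (Fin d → ℝ) → ℝ)
    (hθ : ∀ t x, θ t x = (t - T) * (ψs (t, x) - (∑ j, (vs t x j) ^ 2) / 2)) :
    ∀ (t : ℝ) (x : Fin d → ℝ) (i : Fin d),
      vs t x i
        - ∑ j, (pdx d (fun y => A t y i) x j + pdx d (fun y => A t y j) x i) * vs t x j
      = deriv (fun s => A s x i) t + pdx d (θ t) x i := by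
  intro t x i
  set g : Fin d → ℝ × (Fin d → ℝ) → ℝ := fun j q => fderiv ℝ θs q (0, Pi.single j 1)
  have hθd : Differentiable ℝ θs := hθs.differentiable (by norm_num)
  have hψd : Differentiable ℝ ψs := hψs.differentiable (by norm_num)
  have hg : ∀ j, Differentiable ℝ (g j) := fun j =>
    ((hθs.fderiv_right (m := 1) (by norm_num)).differentiable (by norm_num)).clm_apply
      (differentiable_const _)
  have hv : ∀ s y j, vs s y j = g j (s, y) := fun s y j => by
    rw [hvs, pdx_comp_prodMk_right (hθd _)]
  have hHJx : fderiv ℝ (g i) (t, x) (1, 0)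
      + ∑ j, g j (t, x) * fderiv ℝ (g j) (t, x) (0, Pi.single i 1)
      + fderiv ℝ ψs (t, x) (0, Pi.single i 1) = 0 :=
    fderiv_hamiltonJacobi_apply_eq_zero (fun q => by
      simpa only [(hasDerivAt_comp_prodMk_left (hθd q)).deriv, hv] using hHJ q.1 q.2)
      hθs.contDiffAt (hψd _) _
  have hsum : ∑ j, (pdx d (fun y => A t y i) x j + pdx d (fun y => A t y j) x i) * vs t x j
      = 2 * (t - T) * ∑ j, g j (t, x) * fderiv ℝ (g j) (t, x) (0, Pi.single i 1) := by
    rw [Finset.mul_sum]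
    refine Finset.sum_congr rfl fun j _ => ?_
    simp only [hA, hv, pdx_const_mul, pdx_comp_prodMk_right (hg _ _)]
    rw [fderiv_fderiv_apply_comm hθs.contDiffAt]
    ring
  have hθt : θ t = fun y => (t - T) * (ψs (t, y) - (∑ j, g j (t, y) ^ 2) / 2) :=
    funext fun y => by simp only [hθ, hv]
  rw [hsum, hθt, pdx_const_mul, pdx_sub_half_sum_sq_comp_prodMk_right (hψd _) (hg · _)]
  simp only [hA, hv, deriv_sub_mul_comp_prodMk_left (hg i _)]
  linear_combination (T - t) * hHJx

/-- If `θˢ` is C², `ψˢ` is C¹, `vˢ = ∇ₓθˢ` satisfies the Hamilton–Jacobi equation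
`∂ₜθˢ + |∇ₓθˢ|²/2 + ψˢ = 0`, and we define the dual ansatz `A = (t-T)vˢ` and
`θ = (t-T)(ψˢ - |vˢ|²/2)`, then `(I - ∇ₓA - (∇ₓA)ᵀ)·vˢ = ∂ₜA + ∇ₓθ` holds everywhere
(stated componentwise). -/
theorem stmt6 (d : ℕ) (hd : 1 ≤ d) (T : ℝ) (hT : 0 < T)
    (θs : ℝ × (Fin d → ℝ) → ℝ) (ψs : ℝ × (Fin d → ℝ) → ℝ)
    (hθs : ContDiff ℝ 2 θs) (hψs : ContDiff ℝ 1 ψs)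
    (vs : ℝ → (Fin d → ℝ) → Fin d → ℝ)
    (hvs : ∀ t x i, vs t x i = pdx d (fun y => θs (t, y)) x i)
    (hHJ : ∀ t x, deriv (fun s => θs (s, x)) t
        + (∑ j, (vs t x j) ^ 2) / 2 + ψs (t, x) = 0)
    (A : ℝ → (Fin d → ℝ) → Fin d → ℝ)
    (hA : ∀ t x i, A t x i = (t - T) * vs t x i)
    (θ : ℝ → (Fin d → ℝ) → ℝ)
    (hθ : ∀ t x, θ t x = (t - T) * (ψs (t, x) - (∑ j, (vs t x j) ^ 2) / 2)) :
    ∀ (t : ℝ) (x : Fin d → ℝ) (i : Fin d),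
      vs t x i
        - ∑ j, (pdx d (fun y => A t y i) x j + pdx d (fun y => A t y j) x i) * vs t x j
      = deriv (fun s => A s x i) t + pdx d (θ t) x i :=
  stmt6_general d T θs ψs hθs hψs vs hvs hHJ A hA θ hθ
end

section
/- Let d ≥ 1. Let c : ℝ × ℝ^d → ℝ be C¹, θ : ℝ × ℝ^d → ℝ be C², and ψ : ℝ × ℝ^d → ℝ be C¹, and assume the continuity equation ∂ₜc + ∇ₓ·(c∇ₓθ) = 0 and the Hamilton–Jacobi equation ∂ₜθ + |∇ₓθ|²/2 + ψ = 0 hold everywhere. Then the pressure-less momentum equation ∂ₜ(c∇ₓθ) + ∇ₓ·(c ∇ₓθ ⊗ ∇ₓθ) = −c∇ₓψ holds everywhere, where the divergence of the matrix field c∇ₓθ⊗∇ₓθ is taken row-wise: (∇ₓ·(c∇ₓθ⊗∇ₓθ))_i = Σ_j ∂_{x_j}(c ∂_{x_i}θ ∂_{x_j}θ). -/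
/-! Write `v = ∇ₓθ`. By the product rule, `∂ₜ(c vᵢ) + Σⱼ ∂ⱼ(c vᵢ vⱼ)` splits as
`vᵢ (∂ₜc + Σⱼ ∂ⱼ(c vⱼ)) + c (∂ₜvᵢ + Σⱼ vⱼ ∂ⱼvᵢ)`. The first bracket vanishes by the
continuity equation. For the second, differentiate the Hamilton–Jacobi equation in `xᵢ`:
since second derivatives of `θ` commute, `∂ᵢ∂ₜθ = ∂ₜvᵢ` and `∂ᵢ(|v|²/2) = Σⱼ vⱼ ∂ⱼvᵢ`,
so the bracket is `-∂ᵢψ`. -/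

open Filter Topology

section

variable {E : Type*} [NormedAddCommGroup E] [NormedSpace ℝ E]

theorem deriv_comp_prodMk_left_eq_fderiv_apply {f : ℝ × E → ℝ} {t : ℝ} {x : E}
    (hf : DifferentiableAt ℝ f (t, x)) :
    deriv (fun s => f (s, x)) t = fderiv ℝ f (t, x) (1, 0) :=
  (hf.hasFDerivAt.comp_hasDerivAt t ((hasDerivAt_id t).prodMk (hasDerivAt_const t x))).deriv

theorem fderiv_fderiv_apply_comm_s8 {θ : E → ℝ} {p : E} (hθ : ContDiffAt ℝ 2 θ p) (a b : E) :
    fderiv ℝ (fun q => fderiv ℝ θ q a) p b = fderiv ℝ (fun q => fderiv ℝ θ q b) p a := by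
  have hD : DifferentiableAt ℝ (fderiv ℝ θ) p :=
    (hθ.fderiv_right le_rfl).differentiableAt one_ne_zero
  simp only [fderiv_clm_apply hD (differentiableAt_const _), fderiv_fun_const, Pi.zero_apply,
    ContinuousLinearMap.comp_zero, zero_add, ContinuousLinearMap.flip_apply]
  exact (hθ.isSymmSndFDerivAt (by simp [minSmoothness_of_isRCLikeNormedField])).eq b a

theorem differentiableAt_fderiv_apply {θ : E → ℝ} {p : E} (hθ : ContDiffAt ℝ 2 θ p) (a : E) :
    DifferentiableAt ℝ (fun q => fderiv ℝ θ q a) p :=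
  ((hθ.fderiv_right le_rfl).differentiableAt one_ne_zero).clm_apply (differentiableAt_const a)

theorem fderiv_mul_add_sum_fderiv_mul_mul {ι : Type*} [Fintype ι] {c w : E → ℝ}
    {v : ι → E → ℝ} {p : E} (hc : DifferentiableAt ℝ c p) (hw : DifferentiableAt ℝ w p)
    (hv : ∀ j, DifferentiableAt ℝ (v j) p) (u : E) (e : ι → E) :
    fderiv ℝ (fun q => c q * w q) p u + ∑ j, fderiv ℝ (fun q => c q * w q * v j q) p (e j)
      = w p * (fderiv ℝ c p u + ∑ j, fderiv ℝ (fun q => c q * v j q) p (e j))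
        + c p * (fderiv ℝ w p u + ∑ j, v j p * fderiv ℝ w p (e j)) := by
  have hterm : ∀ j, fderiv ℝ (fun q => c q * w q * v j q) p (e j)
      = w p * fderiv ℝ (fun q => c q * v j q) p (e j) + c p * (v j p * fderiv ℝ w p (e j)) := by
    intro j
    simp only [fderiv_fun_mul (hc.fun_mul hw) (hv j), fderiv_fun_mul hc hw,
      fderiv_fun_mul hc (hv j), add_apply, smul_apply, smul_eq_mul]
    ring
  simp only [hterm, Finset.sum_add_distrib, ← Finset.mul_sum, fderiv_fun_mul hc hw, add_apply,
    smul_apply, smul_eq_mul]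
  ring

theorem pressurelessEuler_of_hamiltonJacobi {ι : Type*} [Fintype ι] {θ ψ : E → ℝ} {p : E}
    (hθ : ContDiffAt ℝ 2 θ p) (hψ : DifferentiableAt ℝ ψ p) (u : E) (e : ι → E)
    (hHJ : ∀ᶠ q in 𝓝 p, fderiv ℝ θ q u + (∑ j, fderiv ℝ θ q (e j) ^ 2) / 2 + ψ q = 0) (w : E) :
    fderiv ℝ (fun q => fderiv ℝ θ q w) p u
      + ∑ j, fderiv ℝ θ p (e j) * fderiv ℝ (fun q => fderiv ℝ θ q w) p (e j)
      = - fderiv ℝ ψ p w := by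
  have hv := differentiableAt_fderiv_apply hθ
  have hF := ((hv u).hasFDerivAt.fun_add ((HasFDerivAt.fun_sum (u := .univ) fun j _ =>
    (hv (e j)).hasFDerivAt.pow 2).mul_const (1 / 2))).fun_add hψ.hasFDerivAt
  have h := congrArg (· w) (hF.unique ((hasFDerivAt_const 0 p).congr_of_eventuallyEq
    (hHJ.mono fun q hq => by rw [← hq]; ring)))
  simp only [one_div, Nat.add_one_sub_one, pow_one, nsmul_eq_mul, Nat.cast_ofNat, add_apply,
    smul_apply, sum_apply, smul_eq_mul, zero_apply] at h
  rw [fderiv_fderiv_apply_comm_s8 hθ u w] at h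
  simp only [fderiv_fderiv_apply_comm_s8 hθ (e _) w, mul_assoc, ← Finset.mul_sum] at h
  linarith

end

theorem pdx_eq_fderiv_apply {d : ℕ} {f : ℝ × (Fin d → ℝ) → ℝ} {t : ℝ} {x : Fin d → ℝ}
    (hf : DifferentiableAt ℝ f (t, x)) (j : Fin d) :
    pdx d (fun y => f (t, y)) x j = fderiv ℝ f (t, x) (0, Pi.single j 1) :=
  congrArg (· (Pi.single j 1)) (hf.hasFDerivAt.comp x (hasFDerivAt_prodMk_right t x)).fderiv

theorem stmt8_general (d : ℕ)
    (c θ ψ : ℝ × (Fin d → ℝ) → ℝ)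
    (hc : ContDiff ℝ 1 c) (hθ : ContDiff ℝ 2 θ) (hψ : ContDiff ℝ 1 ψ)
    (hcont : ∀ (t : ℝ) (x : Fin d → ℝ),
      deriv (fun s => c (s, x)) t
        + ∑ j, pdx d (fun y => c (t, y) * pdx d (fun z => θ (t, z)) y j) x j = 0)
    (hHJ : ∀ (t : ℝ) (x : Fin d → ℝ),
      deriv (fun s => θ (s, x)) t
        + (∑ j, (pdx d (fun z => θ (t, z)) x j) ^ 2) / 2 + ψ (t, x) = 0) :
    ∀ (t : ℝ) (x : Fin d → ℝ) (i : Fin d),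
      deriv (fun s => c (s, x) * pdx d (fun z => θ (s, z)) x i) t
        + ∑ j, pdx d
            (fun y => c (t, y) * pdx d (fun z => θ (t, z)) y i
              * pdx d (fun z => θ (t, z)) y j) x j
      = - c (t, x) * pdx d (fun y => ψ (t, y)) x i := by
  intro t x i
  let e : Fin d → ℝ × (Fin d → ℝ) := fun j => (0, Pi.single j 1)
  let v : Fin d → ℝ × (Fin d → ℝ) → ℝ := fun k q => fderiv ℝ θ q (e k)
  have hc₁ : Differentiable ℝ c := hc.differentiable one_ne_zero
  have hψ₁ : Differentiable ℝ ψ := hψ.differentiable one_ne_zero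
  have hv : ∀ k q, DifferentiableAt ℝ (v k) q := fun k q =>
    differentiableAt_fderiv_apply hθ.contDiffAt (e k)
  have hgrad : ∀ s y k, pdx d (fun z => θ (s, z)) y k = v k (s, y) := fun s y k =>
    pdx_eq_fderiv_apply (hθ.differentiable two_ne_zero _) k
  have hmass :
      fderiv ℝ c (t, x) (1, 0) + ∑ j, fderiv ℝ (fun q => c q * v j q) (t, x) (e j) = 0 := by
    have h := hcont t x
    simp only [hgrad] at h
    rwa [deriv_comp_prodMk_left_eq_fderiv_apply (hc₁ _), Finset.sum_congr rfl fun j _ =>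
      pdx_eq_fderiv_apply (f := fun q => c q * v j q) ((hc₁ _).fun_mul (hv j _)) j] at h
  have heuler := pressurelessEuler_of_hamiltonJacobi hθ.contDiffAt (hψ₁ (t, x)) (1, 0) e
    (Eventually.of_forall fun q => by
      simpa only [hgrad, deriv_comp_prodMk_left_eq_fderiv_apply (hθ.differentiable two_ne_zero _)]
        using hHJ q.1 q.2) (e i)
  simp only [hgrad]
  rw [deriv_comp_prodMk_left_eq_fderiv_apply (f := fun q => c q * v i q)
      ((hc₁ _).fun_mul (hv i _)),
    Finset.sum_congr rfl fun j _ => pdx_eq_fderiv_apply (f := fun q => c q * v i q * v j q)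
      (((hc₁ _).fun_mul (hv i _)).fun_mul (hv j _)) j,
    pdx_eq_fderiv_apply (hψ₁ _), fderiv_mul_add_sum_fderiv_mul_mul (hc₁ _) (hv i _) (hv · _),
    hmass, heuler]
  ring

/-- If `c` is C¹, `θ` is C², `ψ` is C¹, and the continuity equation
`∂ₜc + ∇ₓ·(c∇ₓθ) = 0` together with the Hamilton–Jacobi equation
`∂ₜθ + |∇ₓθ|²/2 + ψ = 0` hold everywhere, then the pressure-less momentum equation
`∂ₜ(c∇ₓθ) + ∇ₓ·(c∇ₓθ⊗∇ₓθ) = -c∇ₓψ` holds everywhere (row-wise divergence). -/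
theorem stmt8 (d : ℕ) (hd : 1 ≤ d)
    (c θ ψ : ℝ × (Fin d → ℝ) → ℝ)
    (hc : ContDiff ℝ 1 c) (hθ : ContDiff ℝ 2 θ) (hψ : ContDiff ℝ 1 ψ)
    (hcont : ∀ (t : ℝ) (x : Fin d → ℝ),
      deriv (fun s => c (s, x)) t
        + ∑ j, pdx d (fun y => c (t, y) * pdx d (fun z => θ (t, z)) y j) x j = 0)
    (hHJ : ∀ (t : ℝ) (x : Fin d → ℝ),
      deriv (fun s => θ (s, x)) t
        + (∑ j, (pdx d (fun z => θ (t, z)) x j) ^ 2) / 2 + ψ (t, x) = 0) :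
    ∀ (t : ℝ) (x : Fin d → ℝ) (i : Fin d),
      deriv (fun s => c (s, x) * pdx d (fun z => θ (s, z)) x i) t
        + ∑ j, pdx d
            (fun y => c (t, y) * pdx d (fun z => θ (t, z)) y i
              * pdx d (fun z => θ (t, z)) y j) x j
      = - c (t, x) * pdx d (fun y => ψ (t, y)) x i :=
  stmt8_general d c θ ψ hc hθ hψ hcont hHJ
end
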